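/- Let k ≥ 2 be an integer and i an integer with 0 ≤ i ≤ 2k, and let F(z) = φ^{4k−2i}(z) φ^{2i}(3z). Then the limit as Im(z) → ∞ of (z+1)^{−2k} F(z/(z+1)) equals (−1)^k/(2^{2k} 3^{i}). That is, the first term of the Fourier series expansion of F at the cusp 1 is (−z−1)^{2k} · (−1)^k/(2^{2k}3^{i}). -/
import Mathlib


open Complex UpperHalfPlane Filter

/-- Ramanujan's theta function `φ(z) = ∑_{n ∈ ℤ} q^{n²}`. -/
noncomputable def phi (z : ℂ) : ℂ :=
  ∑' n : ℤ, Complex.exp (2 * Real.pi * Complex.I * (n : ℂ) ^ 2 * z)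

lemma phi_eq (z : ℂ) : phi z = jacobiTheta (2 * z) := by
  unfold phi jacobiTheta
  exact tsum_congr fun n => by ring_nf

lemma jt_S (τ : ℍ) : jacobiTheta (-(τ : ℂ))⁻¹ = (-Complex.I * τ) ^ (1/2 : ℂ) * jacobiTheta τ := by
  have h := jacobiTheta_S_smul τ
  rwa [UpperHalfPlane.modular_S_smul, UpperHalfPlane.coe_mk] at h

lemma sqrt_pow_even (a : ℂ) (ha : a ≠ 0) (m : ℕ) : (a ^ (1/2 : ℂ)) ^ (2 * m) = a ^ m := by
  rw [pow_mul]
  congr 1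
  rw [sq, ← Complex.cpow_add _ _ ha]
  norm_num

lemma key (k i : ℕ) (hi : i ≤ 2 * k) (z : ℍ) :
    (((1 : ℂ) * (z : ℂ) + 1) ^ (2 * k))⁻¹ *
      (phi ((z : ℂ) / ((1 : ℂ) * (z : ℂ) + 1)) ^ (4 * k - 2 * i) *
        phi (3 * ((z : ℂ) / ((1 : ℂ) * (z : ℂ) + 1))) ^ (2 * i))
    = ((-1 : ℂ) ^ k / (2 ^ (2 * k) * 3 ^ i)) *
      (jacobiTheta (((z : ℂ) + 1) / 2) ^ (4 * k - 2 * i) *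
        jacobiTheta (((z : ℂ) + 1) / 6) ^ (2 * i)) := by
  simp only [one_mul]
  have hu : (z : ℂ) + 1 ≠ 0 := by
    intro h
    have h1 : ((z : ℂ) + 1).im = 0 := by rw [h]; rfl
    have h2 : 0 < ((z : ℂ) + 1).im := by simpa using z.im_pos
    exact absurd h1 h2.ne'
  set u : ℂ := (z : ℂ) + 1 with hu_def
  have him2 : 0 < (u / 2).im := by
    simp only [hu_def, Complex.div_ofNat_im, Complex.add_im, Complex.one_im, add_zero]
    have : (0 : ℝ) < ((z : ℂ)).im := by simpa using z.im_pos
    positivity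
  have him6 : 0 < (u / 6).im := by
    simp only [hu_def, Complex.div_ofNat_im, Complex.add_im, Complex.one_im, add_zero]
    have : (0 : ℝ) < ((z : ℂ)).im := by simpa using z.im_pos
    positivity
  set τ2 : ℍ := ⟨u / 2, him2⟩
  set τ6 : ℍ := ⟨u / 6, him6⟩
  have hphi1 : phi ((z : ℂ) / u) = (-Complex.I * (u / 2)) ^ (1/2 : ℂ) * jacobiTheta (u / 2) := by
    rw [phi_eq, show 2 * ((z : ℂ) / u) = 2 + (-(u / 2))⁻¹ by
      rw [inv_neg, inv_div, show (z : ℂ) = u - 1 by rw [hu_def]; ring]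
      field_simp
      ring, jacobiTheta_two_add]
    exact jt_S τ2
  have hphi2 : phi (3 * ((z : ℂ) / u))
      = (-Complex.I * (u / 6)) ^ (1/2 : ℂ) * jacobiTheta (u / 6) := by
    rw [phi_eq, show 2 * (3 * ((z : ℂ) / u)) = 2 + (2 + (2 + (-(u / 6))⁻¹)) by
      rw [inv_neg, inv_div, show (z : ℂ) = u - 1 by rw [hu_def]; ring]
      field_simp
      ring,
      jacobiTheta_two_add, jacobiTheta_two_add, jacobiTheta_two_add]
    exact jt_S τ6
  obtain ⟨m, hm⟩ : ∃ m, i + m = 2 * k := ⟨2 * k - i, by omega⟩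
  have hA : -Complex.I * (u / 2) ≠ 0 := by
    simp [hu, Complex.I_ne_zero]
  have hB : -Complex.I * (u / 6) ≠ 0 := by
    simp [hu, Complex.I_ne_zero]
  rw [hphi1, hphi2, show 4 * k - 2 * i = 2 * m by omega, mul_pow, mul_pow,
    sqrt_pow_even _ hA, sqrt_pow_even _ hB]
  have hIm : (-Complex.I) ^ m * (-Complex.I) ^ i = (-1 : ℂ) ^ k := by
    rw [← pow_add, show m + i = 2 * k by omega, pow_mul]
    norm_num
  have hAB : (-Complex.I * (u / 2)) ^ m * (-Complex.I * (u / 6)) ^ i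
      = (-1 : ℂ) ^ k * u ^ (2 * k) / (2 ^ (2 * k) * 3 ^ i) := by
    rw [mul_pow, mul_pow, div_pow, div_pow,
      show (-Complex.I) ^ m * (u ^ m / 2 ^ m) * ((-Complex.I) ^ i * (u ^ i / 6 ^ i))
        = ((-Complex.I) ^ m * (-Complex.I) ^ i) * ((u ^ m * u ^ i) / (2 ^ m * 6 ^ i)) by ring,
      hIm, ← pow_add, show m + i = 2 * k by omega,
      show (2 : ℂ) ^ m * 6 ^ i = 2 ^ (2 * k) * 3 ^ i by
        rw [show (6 : ℂ) = 2 * 3 by norm_num, mul_pow, ← mul_assoc, ← pow_add,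
          show m + i = 2 * k by omega],
      mul_div_assoc]
  have hupow : u ^ (2 * k) ≠ 0 := pow_ne_zero _ hu
  have h23 : (2 : ℂ) ^ (2 * k) * 3 ^ i ≠ 0 :=
    mul_ne_zero (pow_ne_zero _ two_ne_zero) (pow_ne_zero _ (by norm_num))
  calc (u ^ (2 * k))⁻¹ *
        ((-Complex.I * (u / 2)) ^ m * jacobiTheta (u / 2) ^ (2 * m) *
          ((-Complex.I * (u / 6)) ^ i * jacobiTheta (u / 6) ^ (2 * i)))
      = (u ^ (2 * k))⁻¹ * ((-Complex.I * (u / 2)) ^ m * (-Complex.I * (u / 6)) ^ i) *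
        (jacobiTheta (u / 2) ^ (2 * m) * jacobiTheta (u / 6) ^ (2 * i)) := by ring
    _ = ((-1 : ℂ) ^ k / (2 ^ (2 * k) * 3 ^ i)) *
        (jacobiTheta (u / 2) ^ (2 * m) * jacobiTheta (u / 6) ^ (2 * i)) := by
        rw [hAB]
        field_simp

lemma jt_tendsto : Tendsto jacobiTheta (Filter.atTop.comap Complex.im) (nhds 1) := by
  have h := isBigO_at_im_infty_jacobiTheta_sub_one
  have h2 : Tendsto (fun τ : ℂ => Real.exp (-Real.pi * τ.im)) (Filter.atTop.comap Complex.im)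
      (nhds 0) := by
    refine Real.tendsto_exp_atBot.comp ?_
    have hc : Tendsto Complex.im (Filter.atTop.comap Complex.im) atTop := tendsto_comap
    exact (tendsto_neg_atBot_iff.mpr (hc.const_mul_atTop Real.pi_pos)).congr
      (by intro x; ring_nf)
  have h3 := (h.trans_tendsto h2).add_const (1 : ℂ)
  simpa using h3

lemma hmap2 : Tendsto (fun z : ℍ => ((z : ℂ) + 1) / 2) atImInfty
    (Filter.atTop.comap Complex.im) := by
  rw [tendsto_comap_iff]
  have he : (Complex.im ∘ fun z : ℍ => ((z : ℂ) + 1) / 2) = fun z : ℍ => z.im / 2 := by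
    funext z; simp [Function.comp, Complex.div_ofNat_im]
  rw [he]
  exact Tendsto.atTop_div_const two_pos tendsto_comap

lemma hmap6 : Tendsto (fun z : ℍ => ((z : ℂ) + 1) / 6) atImInfty
    (Filter.atTop.comap Complex.im) := by
  rw [tendsto_comap_iff]
  have he : (Complex.im ∘ fun z : ℍ => ((z : ℂ) + 1) / 6) = fun z : ℍ => z.im / 6 := by
    funext z; simp [Function.comp, Complex.div_ofNat_im]
  rw [he]
  exact Tendsto.atTop_div_const (by norm_num) tendsto_comap

/-- The first term of the Fourier expansion of `F(z) = φ^{4k−2i}(z) φ^{2i}(3z)` at the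
cusp `1`. -/
theorem phi_pow_first_term_at_cusp_12 (k i : ℕ) (hk : 2 ≤ k) (hi : i ≤ 2 * k) :
    Filter.Tendsto (fun z : UpperHalfPlane =>
        (((1 : ℂ) * (z : ℂ) + 1) ^ (2 * k))⁻¹ *
          (phi ((z : ℂ) / ((1 : ℂ) * (z : ℂ) + 1)) ^ (4 * k - 2 * i) *
            phi (3 * ((z : ℂ) / ((1 : ℂ) * (z : ℂ) + 1))) ^ (2 * i)))
      UpperHalfPlane.atImInfty
      (nhds ((-1 : ℂ) ^ k / (2 ^ (2 * k) * 3 ^ i))) := by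
  rw [funext (key k i hi)]
  have t2 : Tendsto (fun z : ℍ => jacobiTheta (((z : ℂ) + 1) / 2)) atImInfty (nhds 1) :=
    jt_tendsto.comp hmap2
  have t6 : Tendsto (fun z : ℍ => jacobiTheta (((z : ℂ) + 1) / 6)) atImInfty (nhds 1) :=
    jt_tendsto.comp hmap6
  have := ((t2.pow (4 * k - 2 * i)).mul (t6.pow (2 * i))).const_mul
    ((-1 : ℂ) ^ k / (2 ^ (2 * k) * 3 ^ i))
  simpa using this
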